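/- arXiv:1010.5739 — 8 statements merged into one kernel-verified Lean document; each statement's English description precedes it below -/
import Mathlib

section
/- If φ : A^ℕ → A^ℕ is a continuous function that commutes with the shift map σ, then φ is a sliding block code: there exist n ∈ ℕ and a block map d : A^n → A such that φ(x)_i = d(x_i ⋯ x_{i+n-1}) for all x ∈ A^ℕ and i ∈ ℕ. -/
/-- The one-sided shift map. -/
def shift {A : Type*} : (ℕ → A) → (ℕ → A) := fun x i => x (i + 1)

theorem continuous_commuting_is_sliding_block_code {A : Type*} [Fintype A] [Nonempty A]
    [TopologicalSpace A] [DiscreteTopology A]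
    (φ : (ℕ → A) → (ℕ → A)) (hcont : Continuous φ)
    (hcomm : φ ∘ shift = shift ∘ φ) :
    ∃ (n : ℕ) (d : (Fin n → A) → A),
      ∀ (x : ℕ → A) (i : ℕ), φ x i = d (fun j : Fin n => x (i + j)) := by
  classical
  set f : (ℕ → A) → A := fun x => φ x 0 with hf
  have hfc : Continuous f := (continuous_apply 0).comp hcont
  -- local constancy
  have key : ∀ x : ℕ → A, ∃ N : ℕ, ∀ y : ℕ → A, (∀ i < N, y i = x i) → f y = f x := by
    intro x
    have hopen : IsOpen (f ⁻¹' {f x}) := (isOpen_discrete _).preimage hfc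
    obtain ⟨I, u, hu, hsub⟩ := isOpen_pi_iff.mp hopen x rfl
    refine ⟨(I.sup id) + 1, fun y hy => ?_⟩
    have hmem : y ∈ (I : Set ℕ).pi u := by
      intro i hi
      have hiI : i ∈ I := hi
      have : y i = x i := hy i (Nat.lt_succ_of_le (Finset.le_sup (f := id) hiI))
      rw [this]
      exact (hu i hiI).2
    exact hsub hmem
  choose N hN using key
  -- the open cylinders
  set U : (ℕ → A) → Set (ℕ → A) := fun x => ⋂ i ∈ Finset.range (N x), {y | y i = x i} with hU
  have hUopen : ∀ x, IsOpen (U x) := by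
    intro x
    apply isOpen_biInter_finset
    intro i _
    show IsOpen ((fun y : ℕ → A => y i) ⁻¹' {x i})
    exact (isOpen_discrete _).preimage (continuous_apply i)
  have hUmem : ∀ x, x ∈ U x := by
    intro x
    simp [hU]
  obtain ⟨t, _, hcover⟩ := (isCompact_univ : IsCompact (Set.univ : Set (ℕ → A))).elim_nhds_subcover U
    (fun x _ => (hUopen x).mem_nhds (hUmem x))
  set n : ℕ := t.sup N with hn
  -- uniform local constancy
  have unif : ∀ y z : ℕ → A, (∀ i < n, z i = y i) → f z = f y := by
    intro y z hyz
    have : y ∈ ⋃ x ∈ t, U x := hcover (Set.mem_univ y)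
    simp only [Set.mem_iUnion] at this
    obtain ⟨x, hxt, hyU⟩ := this
    have hy : ∀ i < N x, y i = x i := by
      intro i hi
      have := Set.mem_iInter₂.mp hyU i (Finset.mem_range.mpr hi)
      exact this
    have hNx : N x ≤ n := Finset.le_sup hxt
    have hz : ∀ i < N x, z i = x i := fun i hi =>
      (hyz i (lt_of_lt_of_le hi hNx)).trans (hy i hi)
    rw [hN x z hz, hN x y hy]
  -- the block map
  refine ⟨n, fun w => f (fun i => if h : i < n then w ⟨i, h⟩ else Classical.arbitrary A),
    fun x i => ?_⟩
  -- iterated shift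
  have hshift : ∀ (k : ℕ) (y : ℕ → A) (j : ℕ), shift^[k] y j = y (j + k) := by
    intro k
    induction k with
    | zero => intro y j; simp
    | succ k ih =>
      intro y j
      rw [Function.iterate_succ_apply, ih (shift y) j]
      show y (j + k + 1) = y (j + (k + 1))
      rw [Nat.add_assoc]
  have hcomm' : ∀ (k : ℕ) (y : ℕ → A), φ (shift^[k] y) = shift^[k] (φ y) := by
    intro k
    induction k with
    | zero => intro y; rfl
    | succ k ih =>
      intro y
      rw [Function.iterate_succ_apply, ih (shift y),
        show φ (shift y) = shift (φ y) from congrFun hcomm y,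
        ← Function.iterate_succ_apply]
  have h1 : φ x i = f (shift^[i] x) := by
    rw [hf]
    simp only
    rw [hcomm' i x, hshift i (φ x) 0, Nat.zero_add]
  rw [h1]
  apply unif
  intro j hj
  rw [hshift i x j]
  simp [hj, Nat.add_comm]
end

section
/- A function φ : A^ℕ → A^ℕ is continuous and commutes with the shift map σ if and only if φ is a sliding block code, i.e., there exist n ∈ ℕ and d : A^n → A with φ(x)_i = d(x_i ⋯ x_{i+n-1}) for all x and i. -/
/-- A continuous map from a compact product of discrete spaces into a discrete space
depends only on finitely many coordinates. -/
lemma exists_window {A : Type*} [Fintype A] [TopologicalSpace A] [DiscreteTopology A]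
    (f : (ℕ → A) → A) (hf : Continuous f) :
    ∃ n : ℕ, ∀ x y : ℕ → A, (∀ i < n, x i = y i) → f x = f y := by
  have hcyl : ∀ x : ℕ → A, ∃ I : Finset ℕ, ∀ y, (∀ i ∈ I, y i = x i) → f y = f x := by
    intro x
    have hopen : IsOpen {y : ℕ → A | f y = f x} :=
      hf.isOpen_preimage {f x} (isOpen_discrete _)
    rw [isOpen_pi_iff] at hopen
    obtain ⟨I, u, hu, hsub⟩ := hopen x rfl
    refine ⟨I, fun y hy => hsub ?_⟩
    intro i hi
    rw [hy i hi]
    exact (hu i hi).2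
  choose I hI using hcyl
  set U : (ℕ → A) → Set (ℕ → A) := fun z => {y | ∀ i ∈ I z, y i = z i} with hU
  have hUopen : ∀ z, IsOpen (U z) := by
    intro z
    have : U z = ⋂ i ∈ I z, (fun y : ℕ → A => y i) ⁻¹' {z i} := by
      ext y; simp [hU, Set.mem_iInter]
    rw [this]
    exact isOpen_biInter_finset fun i _ =>
      (continuous_apply i).isOpen_preimage _ (isOpen_discrete _)
  have hcov : (Set.univ : Set (ℕ → A)) ⊆ ⋃ z, U z := by
    intro x _
    exact Set.mem_iUnion.2 ⟨x, fun i _ => rfl⟩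
  obtain ⟨t, ht⟩ := isCompact_univ.elim_finite_subcover U hUopen hcov
  refine ⟨(t.sup fun z => (I z).sup id) + 1, fun x y hxy => ?_⟩
  obtain ⟨z, hz, hxz⟩ : ∃ z ∈ t, x ∈ U z := by
    have := ht (Set.mem_univ x)
    simpa using this
  have hIbound : ∀ i ∈ I z, i < (t.sup fun z => (I z).sup id) + 1 := by
    intro i hi
    have h1 : i ≤ (I z).sup id := Finset.le_sup (f := id) hi
    have h2 : (I z).sup id ≤ t.sup fun z => (I z).sup id :=
      Finset.le_sup (f := fun z => (I z).sup id) hz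
    omega
  have hyz : y ∈ U z := by
    intro i hi
    rw [← hxy i (hIbound i hi)]
    exact hxz i hi
  rw [hI z x hxz, hI z y hyz]

theorem continuous_commuting_iff_sliding_block_code {A : Type*} [Fintype A] [Nonempty A]
    [TopologicalSpace A] [DiscreteTopology A]
    (φ : (ℕ → A) → (ℕ → A)) :
    (Continuous φ ∧ φ ∘ shift = shift ∘ φ) ↔
      ∃ (n : ℕ) (d : (Fin n → A) → A),
        ∀ (x : ℕ → A) (i : ℕ), φ x i = d (fun j : Fin n => x (i + j)) := by
  have hA : Inhabited A := Classical.inhabited_of_nonempty ‹_›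
  constructor
  · rintro ⟨hφ, hc⟩
    set f : (ℕ → A) → A := fun x => φ x 0 with hf
    have hfc : Continuous f := (continuous_apply 0).comp hφ
    obtain ⟨n, hn⟩ := exists_window f hfc
    refine ⟨n, fun w => f (fun i => if h : i < n then w ⟨i, h⟩ else default), ?_⟩
    have hshift : ∀ (x : ℕ → A) (i : ℕ), φ x i = f (fun j => x (i + j)) := by
      intro x i
      induction i generalizing x with
      | zero => simp [hf]
      | succ i ih =>
        have hcx : φ (shift x) = shift (φ x) := congrFun hc x
        have h1 : φ x (i + 1) = φ (shift x) i := (congrFun hcx i).symm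
        rw [h1, ih (shift x)]
        congr 1
        funext j
        show x (i + j + 1) = x (i + 1 + j)
        congr 1
        omega
    intro x i
    rw [hshift x i]
    apply hn
    intro j hj
    simp [hj]
  · rintro ⟨n, d, hd⟩
    constructor
    · have hdc : Continuous d := continuous_of_discreteTopology
      apply continuous_pi
      intro i
      have : (fun x : ℕ → A => φ x i) = fun x => d (fun j : Fin n => x (i + j)) := by
        funext x; exact hd x i
      rw [this]
      exact hdc.comp (continuous_pi fun j => continuous_apply (i + j))
    · funext x i
      show φ (shift x) i = φ x (i + 1)
      rw [hd (shift x) i, hd x (i + 1)]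
      congr 1
      funext j
      show x (i + j + 1) = x (i + 1 + j)
      congr 1
      omega
end

section
/- Let d : A^n → A be a weakly progressive block map (of some order m). Then for each fixed word x_1 ⋯ x_{n-1} ∈ A^{n-1}, the restriction of τ_d to the cylinder Z(x_1 ⋯ x_{n-1}) is a bijection onto ⋃_{a ∈ A} Z(d(x_1 ⋯ x_{n-1} a)). -/
/-- The sliding block code induced by a block map `d : A^n → A`. -/
def tau {A : Type*} {n : ℕ} (d : (Fin n → A) → A) : (ℕ → A) → (ℕ → A) :=
  fun x i => d fun j => x (i + j)

/-- The cylinder set of sequences beginning with the word `w`. -/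
def cyl {A : Type*} {k : ℕ} (w : Fin k → A) : Set (ℕ → A) :=
  {x | ∀ i : Fin k, x (i : ℕ) = w i}

/-- The sequence `μ₁ ⋯ μₙ a α₁ α₂ ⋯` starting with the word `μ`, followed by the
letter `a`, followed by the (infinite) tail `α`. -/
def seqOf {A : Type*} (n : ℕ) (μ : Fin n → A) (a : A) (α : ℕ → A) : ℕ → A :=
  fun k => if h : k < n then μ ⟨k, h⟩ else if k = n then a else α (k - (n + 1))

/-- A block map `d : A^(n+1) → A` is weakly progressive of order `m+1` if for every word
`μ ∈ A^(n+1)` and every `ν ∈ A^(m+1)` with `d μ = ν₁`, there is a unique `a ∈ A` such that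
`d(μ₁⋯μₙ a) d(μ₂⋯μₙ a α₁) ⋯ = ν` has a solution `α`. -/
def WeaklyProgressive {A : Type*} {n : ℕ} (d : (Fin (n + 1) → A) → A) (m : ℕ) : Prop :=
  ∀ (μ : Fin (n + 1) → A) (ν : Fin (m + 1) → A), d μ = ν 0 →
    ∃! a : A, ∃ α : ℕ → A,
      ∀ i : Fin (m + 1), tau d (seqOf n (fun j : Fin n => μ j.castSucc) a α) (i : ℕ) = ν i

section helpers
variable {A : Type*} {n : ℕ}

lemma seqOf_lt (μ : Fin n → A) (a : A) (α : ℕ → A) (p : ℕ) (h : p < n) :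
    seqOf n μ a α p = μ ⟨p, h⟩ := dif_pos h

lemma seqOf_self (μ : Fin n → A) (a : A) (α : ℕ → A) :
    seqOf n μ a α n = a := by
  unfold seqOf; simp

lemma seqOf_ge (μ : Fin n → A) (a : A) (α : ℕ → A) (p : ℕ) (h : n + 1 ≤ p) :
    seqOf n μ a α p = α (p - (n + 1)) := by
  unfold seqOf
  rw [dif_neg (by omega), if_neg (by omega)]

lemma seqOf_eq_shift (x : ℕ → A) (k : ℕ) :
    seqOf n (fun j : Fin n => x (k + (j : ℕ))) (x (k + n)) (fun i => x (k + n + 1 + i))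
      = fun p => x (k + p) := by
  funext p
  rcases lt_trichotomy p n with h | h | h
  · rw [seqOf_lt _ _ _ _ h]
  · subst h; rw [seqOf_self]
  · rw [seqOf_ge _ _ _ _ (by omega)]; congr 1; omega

lemma tau_shift (d : (Fin (n + 1) → A) → A) (x : ℕ → A) (k i : ℕ) :
    tau d (fun p => x (k + p)) i = tau d x (k + i) := by
  unfold tau; congr 1; funext j; show x (k + (i + (j:ℕ))) = _; rw [← add_assoc]

lemma tau_seqOf_zero (d : (Fin (n + 1) → A) → A) (μ : Fin n → A) (a : A) (α : ℕ → A) :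
    tau d (seqOf n μ a α) 0 = d (Fin.snoc μ a) := by
  unfold tau; congr 1; funext j
  rw [zero_add]
  cases j using Fin.lastCases with
  | last => rw [Fin.snoc_last, Fin.val_last, seqOf_self]
  | cast j =>
    rw [Fin.snoc_castSucc, Fin.coe_castSucc, seqOf_lt _ _ _ _ j.isLt]

/-- cleaned-up weak progressiveness -/
lemma wp' {d : (Fin (n + 1) → A) → A} {m : ℕ} (hd : WeaklyProgressive d m)
    (u : Fin n → A) (b : A) (ν : Fin (m + 1) → A) (hb : d (Fin.snoc u b) = ν 0) :
    ∃! a : A, ∃ α : ℕ → A,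
      ∀ i : Fin (m + 1), tau d (seqOf n u a α) (i : ℕ) = ν i := by
  have h := hd (Fin.snoc u b) ν hb
  simpa [Fin.snoc_castSucc] using h

end helpers

section inj
variable {A : Type*} {n : ℕ}

lemma inj_aux {d : (Fin (n + 1) → A) → A} {m : ℕ} (hd : WeaklyProgressive d m)
    (x x' : ℕ → A) (hpre : ∀ i, i < n → x i = x' i) (hxy : tau d x = tau d x') :
    x = x' := by
  funext k
  induction k using Nat.strong_induction_on with
  | _ k ih =>
    by_cases hk : k < n
    · exact hpre k hk
    · obtain ⟨t, rfl⟩ : ∃ t, k = t + n := ⟨k - n, by omega⟩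
      have hprefix : ∀ j : Fin n, x (t + (j : ℕ)) = x' (t + (j : ℕ)) := by
        intro j; exact ih (t + j) (by omega)
      have key := wp' hd (fun j : Fin n => x (t + (j : ℕ))) (x (t + n))
        (fun i : Fin (m + 1) => tau d x (t + (i : ℕ))) ?hb
      case hb =>
        show d _ = tau d x (t + ((0 : Fin (m + 1)) : ℕ))
        rw [Fin.val_zero, add_zero]
        unfold tau
        congr 1
        funext j
        cases j using Fin.lastCases with
        | last => rw [Fin.snoc_last, Fin.val_last]
        | cast j => rw [Fin.snoc_castSucc, Fin.coe_castSucc]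
      have h1 : ∃ α : ℕ → A, ∀ i : Fin (m + 1),
          tau d (seqOf n (fun j : Fin n => x (t + (j : ℕ))) (x (t + n)) α) (i : ℕ)
            = tau d x (t + (i : ℕ)) := by
        refine ⟨fun i => x (t + n + 1 + i), fun i => ?_⟩
        rw [seqOf_eq_shift, tau_shift]
      have h2 : ∃ α : ℕ → A, ∀ i : Fin (m + 1),
          tau d (seqOf n (fun j : Fin n => x (t + (j : ℕ))) (x' (t + n)) α) (i : ℕ)
            = tau d x (t + (i : ℕ)) := by
        refine ⟨fun i => x' (t + n + 1 + i), fun i => ?_⟩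
        have : (fun j : Fin n => x (t + (j : ℕ))) = fun j : Fin n => x' (t + (j : ℕ)) :=
          funext hprefix
        rw [this, seqOf_eq_shift, tau_shift, hxy]
      exact key.unique h1 h2

end inj

section surj
variable {A : Type*} {n : ℕ}

/-- order-1 weak progressiveness makes `d (snoc u ·)` surjective. -/
lemma m0_surj {d : (Fin (n + 1) → A) → A} [Fintype A] [Nonempty A]
    (hd : WeaklyProgressive d 0) (u : Fin n → A) (c : A) :
    ∃ b, d (Fin.snoc u b) = c := by
  have hinj : Function.Injective (fun b => d (Fin.snoc u b)) := by
    intro a₁ a₂ h12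
    simp only at h12
    have key := wp' hd u a₁ (fun _ : Fin 1 => d (Fin.snoc u a₁)) rfl
    have s1 : ∃ α : ℕ → A, ∀ i : Fin 1,
        tau d (seqOf n u a₁ α) (i : ℕ) = d (Fin.snoc u a₁) := by
      refine ⟨Classical.arbitrary _, fun i => ?_⟩
      have : (i : ℕ) = 0 := by omega
      rw [this, tau_seqOf_zero]
    have s2 : ∃ α : ℕ → A, ∀ i : Fin 1,
        tau d (seqOf n u a₂ α) (i : ℕ) = d (Fin.snoc u a₁) := by
      refine ⟨Classical.arbitrary _, fun i => ?_⟩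
      have : (i : ℕ) = 0 := by omega
      rw [this, tau_seqOf_zero, ← h12]
    exact key.unique s1 s2
  obtain ⟨b, hb⟩ := (Finite.injective_iff_surjective.mp hinj) c
  exact ⟨b, hb⟩

lemma snoc_shift_eq {d : (Fin (n + 1) → A) → A} (z : ℕ → A) :
    d (Fin.snoc (fun j : Fin n => z ((j : ℕ) + 1)) (z (n + 1))) = tau d z 1 := by
  unfold tau
  congr 1
  funext j
  cases j using Fin.lastCases with
  | last => rw [Fin.snoc_last, Fin.val_last, add_comm]
  | cast j => rw [Fin.snoc_castSucc, Fin.coe_castSucc, add_comm]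

lemma exists_b {d : (Fin (n + 1) → A) → A} {m : ℕ} [Fintype A] [Nonempty A]
    (hd : WeaklyProgressive d m) (y : ℕ → A) (k : ℕ)
    (u : Fin n → A) (a : A) (α : ℕ → A)
    (h : ∀ i : Fin (m + 1), tau d (seqOf n u a α) (i : ℕ) = y (k + i)) :
    ∃ b, d (Fin.snoc (fun j : Fin n => seqOf n u a α ((j : ℕ) + 1)) b) = y (k + 1) := by
  cases m with
  | zero => exact m0_surj hd _ _
  | succ m' =>
    refine ⟨seqOf n u a α (n + 1), ?_⟩
    rw [snoc_shift_eq (d := d) (z := seqOf n u a α)]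
    have := h ⟨1, by omega⟩
    simpa using this

end surj

section surj2
variable {A : Type*} {n : ℕ}

lemma surj_aux {d : (Fin (n + 1) → A) → A} {m : ℕ} [Fintype A] [Nonempty A]
    (hd : WeaklyProgressive d m) (y : ℕ → A) (w : Fin n → A) (a₀ : A)
    (h0 : y 0 = d (Fin.snoc w a₀)) :
    ∃ x : ℕ → A, x ∈ cyl w ∧ tau d x = y := by
  classical
  set H : ℕ → ((Fin n → A) × A × (ℕ → A)) → Prop :=
    fun k p => ∀ i : Fin (m + 1),
      tau d (seqOf n p.1 p.2.1 p.2.2) (i : ℕ) = y (k + i) with hHdef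
  -- base state
  have key0 := wp' hd w a₀ (fun i : Fin (m + 1) => y (0 + (i : ℕ))) (by simpa using h0.symm)
  obtain ⟨ab, ⟨αb, hαb⟩, -⟩ := key0
  have hp0 : H 0 (w, ab, αb) := hαb
  -- step
  have step_ex : ∀ k p, H k p → ∃ q, H (k + 1) q ∧
      ∀ j : Fin n, q.1 j = seqOf n p.1 p.2.1 p.2.2 ((j : ℕ) + 1) := by
    intro k p hp
    obtain ⟨b, hb⟩ := exists_b hd y k p.1 p.2.1 p.2.2 hp
    have key := wp' hd (fun j : Fin n => seqOf n p.1 p.2.1 p.2.2 ((j : ℕ) + 1)) b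
      (fun i : Fin (m + 1) => y (k + 1 + (i : ℕ))) (by simpa using hb)
    obtain ⟨a', ⟨α', hα'⟩, -⟩ := key
    exact ⟨((fun j : Fin n => seqOf n p.1 p.2.1 p.2.2 ((j : ℕ) + 1)), a', α'), hα', fun j => rfl⟩
  -- build the chain
  let G : ∀ k : ℕ, {p // H k p} := fun k =>
    Nat.rec ⟨(w, ab, αb), hp0⟩
      (fun k' ih => ⟨(step_ex k' ih.1 ih.2).choose, (step_ex k' ih.1 ih.2).choose_spec.1⟩) k
  have hlink : ∀ k (j : Fin n),
      (G (k + 1)).1.1 j = seqOf n (G k).1.1 (G k).1.2.1 (G k).1.2.2 ((j : ℕ) + 1) :=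
    fun k => (step_ex k (G k).1 (G k).2).choose_spec.2
  set z : ℕ → ℕ → A := fun k => seqOf n (G k).1.1 (G k).1.2.1 (G k).1.2.2 with hzdef
  have hstep : ∀ k p, p < n → z (k + 1) p = z k (p + 1) := by
    intro k p hp
    show seqOf n _ _ _ p = _
    rw [seqOf_lt _ _ _ _ hp]
    exact hlink k ⟨p, hp⟩
  have L : ∀ j, j ≤ n → ∀ k, z (k + j) 0 = z k j := by
    intro j
    induction j with
    | zero => intro _ k; rfl
    | succ j' ihj =>
      intro hj k
      have e1 : k + (j' + 1) = (k + 1) + j' := by omega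
      rw [e1, ihj (by omega) (k + 1), hstep k j' (by omega)]
  refine ⟨fun k => z k 0, ?_, ?_⟩
  · intro i
    show z (i : ℕ) 0 = w i
    rw [show (i : ℕ) = 0 + (i : ℕ) by omega, L i (by omega) 0]
    show seqOf n (G 0).1.1 _ _ (i : ℕ) = w i
    rw [seqOf_lt _ _ _ _ i.isLt]
    rfl
  · funext k
    have hwin : ∀ j : Fin (n + 1), z (k + (j : ℕ)) 0 = z k (j : ℕ) := fun j =>
      L j (by omega) k
    have h0' := (G k).2 ⟨0, Nat.succ_pos m⟩
    show tau d (fun k => z k 0) k = y k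
    unfold tau
    have : (fun j : Fin (n + 1) => z (k + (j : ℕ)) 0) = fun j : Fin (n + 1) => z k (0 + (j : ℕ)) := by
      funext j; rw [hwin j, zero_add]
    rw [this]
    show d (fun j : Fin (n + 1) => z k (0 + (j : ℕ))) = y k
    exact h0'
end surj2

theorem weakly_progressive_bijOn {A : Type*} [Fintype A] [Nonempty A] {n : ℕ}
    (d : (Fin (n + 1) → A) → A) (m : ℕ) (hd : WeaklyProgressive d m)
    (w : Fin n → A) :
    Set.BijOn (tau d) (cyl w) {y : ℕ → A | ∃ a : A, y 0 = d (Fin.snoc w a)} := by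
  refine ⟨?_, ?_, ?_⟩
  · intro x hx
    refine ⟨x n, ?_⟩
    show tau d x 0 = _
    unfold tau
    congr 1
    funext j
    cases j using Fin.lastCases with
    | last => rw [Fin.snoc_last, Fin.val_last, zero_add]
    | cast j =>
      rw [Fin.snoc_castSucc, Fin.coe_castSucc, zero_add]
      exact hx j
  · intro x hx x' hx' heq
    exact inj_aux hd x x' (fun i hi => (hx ⟨i, hi⟩).trans (hx' ⟨i, hi⟩).symm) heq
  · rintro y ⟨a, ha⟩
    obtain ⟨x, hx, hxy⟩ := surj_aux hd y w a ha
    exact ⟨x, hx, hxy⟩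
end

section
/- If d : A^n → A is a progressive block map (for each fixed x_1⋯x_{n-1}, the map a ↦ d(x_1 ⋯ x_{n-1} a) is a bijection of A), then the induced sliding block code τ_d : A^ℕ → A^ℕ is a local homeomorphism that is |A|^{n-1}-to-1 and surjective. -/
/-- A block map `d : A^(n+1) → A` is progressive if for each word `w ∈ A^n` the map
`a ↦ d(w a)` is a bijection of `A`. -/
def Progressive {A : Type*} {n : ℕ} (d : (Fin (n + 1) → A) → A) : Prop :=
  ∀ w : Fin n → A, Function.Bijective fun a : A => d (Fin.snoc w a)

section Aux

variable {A : Type*} {n : ℕ} (d : (Fin (n + 1) → A) → A) (hd : Progressive d)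

/-- The bijection `a ↦ d(w a)` as an equiv. -/
noncomputable def eqvD (w : Fin n → A) : A ≃ A :=
  Equiv.ofBijective _ (hd w)

/-- The inverse sequence: given the first `n` letters `w` and the target `y`, reconstruct `x`. -/
noncomputable def invSeq (w : Fin n → A) (y : ℕ → A) : ℕ → A
  | i =>
    if h : i < n then w ⟨i, h⟩
    else (eqvD d hd (fun j : Fin n => invSeq w y (i - n + j))).symm (y (i - n))
  decreasing_by have := j.isLt; omega

lemma wordEq (x : ℕ → A) (i : ℕ) :
    (fun j : Fin (n + 1) => x (i + j)) =
      Fin.snoc (fun j : Fin n => x (i + j)) (x (i + n)) := by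
  funext j
  refine Fin.lastCases ?_ ?_ j
  · simp
  · intro k; simp

lemma invSeq_lt {i : ℕ} (h : i < n) (w : Fin n → A) (y : ℕ → A) :
    invSeq d hd w y i = w ⟨i, h⟩ := by
  rw [invSeq]; simp [h]

lemma invSeq_ge {i : ℕ} (h : n ≤ i) (w : Fin n → A) (y : ℕ → A) :
    invSeq d hd w y i =
      (eqvD d hd (fun j : Fin n => invSeq d hd w y (i - n + j))).symm (y (i - n)) := by
  rw [invSeq]; simp [Nat.not_lt.2 h]

lemma tau_invSeq (w : Fin n → A) (y : ℕ → A) : tau d (invSeq d hd w y) = y := by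
  funext i
  show d (fun j : Fin (n + 1) => invSeq d hd w y (i + j)) = y i
  rw [wordEq]
  have h1 : invSeq d hd w y (i + n) =
      (eqvD d hd (fun j : Fin n => invSeq d hd w y (i + j))).symm (y i) := by
    rw [invSeq_ge d hd (by omega)]
    simp only [Nat.add_sub_cancel]
  rw [h1]
  exact (eqvD d hd _).apply_symm_apply (y i)

lemma invSeq_tau (x : ℕ → A) : invSeq d hd (fun j : Fin n => x j) (tau d x) = x := by
  funext i
  induction i using Nat.strong_induction_on with
  | _ i ih =>
    by_cases h : i < n
    · rw [invSeq_lt d hd h]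
    · rw [invSeq_ge d hd (Nat.le_of_not_lt h)]
      have hw : (fun j : Fin n => invSeq d hd (fun j : Fin n => x j) (tau d x) (i - n + j))
          = fun j : Fin n => x (i - n + j) := by
        funext j; exact ih _ (by have := j.isLt; omega)
      rw [hw]
      have h2 : tau d x (i - n) = (eqvD d hd (fun j : Fin n => x (i - n + j))) (x i) := by
        show d (fun j : Fin (n + 1) => x (i - n + j)) = _
        rw [wordEq, Nat.sub_add_cancel (Nat.le_of_not_lt h)]
        rfl
      rw [h2, Equiv.symm_apply_apply]

lemma invSeq_prefix (w : Fin n → A) (y : ℕ → A) (j : Fin n) :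
    invSeq d hd w y j = w j := by
  rw [invSeq_lt d hd j.isLt]

variable [Fintype A] [TopologicalSpace A] [DiscreteTopology A]

omit [Fintype A] in
lemma tau_cont : Continuous (tau d) := by
  refine continuous_pi fun i => ?_
  have : (fun x : ℕ → A => tau d x i)
      = d ∘ (fun x : ℕ → A => fun j : Fin (n + 1) => x (i + j)) := rfl
  rw [this]
  exact continuous_of_discreteTopology.comp (continuous_pi fun j => continuous_apply _)

omit [Fintype A] in
lemma invSeq_cont (w : Fin n → A) : Continuous (fun y => invSeq d hd w y) := by
  refine continuous_pi fun i => ?_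
  induction i using Nat.strong_induction_on with
  | _ i ih =>
    by_cases h : i < n
    · have : (fun y : ℕ → A => invSeq d hd w y i) = fun _ => w ⟨i, h⟩ :=
        funext fun y => invSeq_lt d hd h w y
      rw [this]; exact continuous_const
    · have : (fun y : ℕ → A => invSeq d hd w y i)
          = (fun p : (Fin n → A) × A => (eqvD d hd p.1).symm p.2) ∘
            (fun y : ℕ → A => (fun j : Fin n => invSeq d hd w y (i - n + j), y (i - n))) := by
        funext y; exact invSeq_ge d hd (Nat.le_of_not_lt h) w y
      rw [this]
      exact continuous_of_discreteTopology.comp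
        ((continuous_pi fun j => ih _ (by have := j.isLt; omega)).prodMk (continuous_apply _))

/-- The partial homeomorphism given by `tau d` on the cylinder with prefix `w`. -/
noncomputable def tauPH (w : Fin n → A) : OpenPartialHomeomorph (ℕ → A) (ℕ → A) where
  toFun := tau d
  invFun := invSeq d hd w
  source := {x | (fun j : Fin n => x j) = w}
  target := Set.univ
  map_source' := fun _ _ => trivial
  map_target' := fun y _ => by
    show (fun j : Fin n => invSeq d hd w y j) = w
    funext j; exact invSeq_prefix d hd w y j
  left_inv' := fun x hx => by
    have hx' : (fun j : Fin n => x j) = w := hx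
    rw [← hx']
    exact invSeq_tau d hd x
  right_inv' := fun y _ => tau_invSeq d hd w y
  open_source := by
    show IsOpen ((fun x : ℕ → A => fun j : Fin n => x j) ⁻¹' {w})
    exact (isOpen_discrete {w}).preimage (continuous_pi fun j : Fin n => continuous_apply (j : ℕ))
  open_target := isOpen_univ
  continuousOn_toFun := (tau_cont d).continuousOn
  continuousOn_invFun := (invSeq_cont d hd w).continuousOn

end Aux

theorem progressive_local_homeo {A : Type*} [Fintype A] [Nonempty A]
    [TopologicalSpace A] [DiscreteTopology A] {n : ℕ}
    (d : (Fin (n + 1) → A) → A) (hd : Progressive d) :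
    IsLocalHomeomorph (tau d) ∧ Function.Surjective (tau d) ∧
    ∀ y : ℕ → A, Nat.card {x : ℕ → A // tau d x = y} = Fintype.card A ^ n := by
  refine ⟨?_, ?_, ?_⟩
  · intro x
    exact ⟨tauPH d hd (fun j : Fin n => x j), rfl, rfl⟩
  · intro y
    exact ⟨invSeq d hd (Classical.arbitrary _) y, tau_invSeq d hd _ y⟩
  · intro y
    have e : {x : ℕ → A // tau d x = y} ≃ (Fin n → A) :=
      { toFun := fun x => fun j : Fin n => x.1 j
        invFun := fun w => ⟨invSeq d hd w y, tau_invSeq d hd w y⟩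
        left_inv := fun x => by
          apply Subtype.ext
          have := invSeq_tau d hd x.1
          rw [x.2] at this
          exact this
        right_inv := fun w => funext fun j => invSeq_prefix d hd w y j }
    rw [Nat.card_congr e]
    simp [Nat.card_eq_fintype_card]
end

section
/- Let A = {0,1,2,3} and d : A^2 → A be defined by d(00)=0, d(01)=0, d(02)=1, d(03)=1, d(10)=3, d(11)=3, d(12)=2, d(13)=2, d(20)=2, d(21)=2, d(22)=3, d(23)=3, d(30)=1, d(31)=1, d(32)=0, d(33)=0. Then the sliding block code τ_d is a local homeomorphism on A^ℕ, but d is not progressive, and there is no progressive block map d' with τ_{d'} = τ_d. -/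
/-- The table of values of the block map of the counterexample: entry `(i, j)` is `d(ij)`. -/
def dTable : Matrix (Fin 4) (Fin 4) (Fin 4) :=
  !![0, 0, 1, 1;
     3, 3, 2, 2;
     2, 2, 3, 3;
     1, 1, 0, 0]

/-! Auxiliary -/

def hb : Fin 4 → Fin 2 := ![0,0,1,1]
def lb : Fin 4 → Fin 2 := ![0,1,0,1]
def mk2 : Fin 2 → Fin 2 → Fin 4 := fun a b => ![![0,1],![2,3]] a b

/-- The two-block map as a plain map on sequences. -/
def tauD : (ℕ → Fin 4) → ℕ → Fin 4 := fun x i => dTable (x i) (x (i+1))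

def secA (h : Fin 2) (y : ℕ → Fin 4) : ℕ → Fin 2
  | 0 => h
  | (i+1) => secA h y i + hb (y i) + lb (y i)

/-- Section of `tauD` with prescribed high bit of the zeroth coordinate. -/
def sec (h : Fin 2) (y : ℕ → Fin 4) : ℕ → Fin 4 :=
  fun i => mk2 (secA h y i) (secA h y i + hb (y i))

lemma tauD_sec (h : Fin 2) (y : ℕ → Fin 4) : tauD (sec h y) = y := by
  funext i
  have key : ∀ (α : Fin 2) (t : Fin 4) (β : Fin 2),
      dTable (mk2 α (α + hb t)) (mk2 (α + hb t + lb t) β) = t := by decide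
  show dTable (sec h y i) (sec h y (i+1)) = y i
  simp only [sec, secA]
  exact key _ _ _

lemma secA_tauD (h : Fin 2) (x : ℕ → Fin 4) (hx : hb (x 0) = h) :
    ∀ i, secA h (tauD x) i = hb (x i) := by
  intro i
  induction i with
  | zero => exact hx.symm
  | succ i ih =>
      have key : ∀ u v : Fin 4, hb u + hb (dTable u v) + lb (dTable u v) = hb v := by decide
      show secA h (tauD x) i + hb (tauD x i) + lb (tauD x i) = hb (x (i+1))
      rw [ih]; exact key _ _

lemma sec_tauD (h : Fin 2) (x : ℕ → Fin 4) (hx : hb (x 0) = h) : sec h (tauD x) = x := by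
  have key : ∀ u v : Fin 4, mk2 (hb u) (hb u + hb (dTable u v)) = u := by decide
  funext i
  show mk2 (secA h (tauD x) i) (secA h (tauD x) i + hb (tauD x i)) = x i
  rw [secA_tauD h x hx]
  exact key _ _

lemma hb_mk2 : ∀ a b, hb (mk2 a b) = a := by decide

lemma tauD_inj {x x' : ℕ → Fin 4} (hxy : tauD x = tauD x') (h0 : hb (x 0) = hb (x' 0)) :
    x = x' := by
  have h1 := sec_tauD (hb (x 0)) x rfl
  have h2 := sec_tauD (hb (x 0)) x' h0.symm
  rw [← h1, ← h2, hxy]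

lemma secA_continuous (h : Fin 2) (i : ℕ) : Continuous (fun y => secA h y i) := by
  induction i with
  | zero => exact continuous_const
  | succ i ih =>
      show Continuous (fun y => secA h y i + hb (y i) + lb (y i))
      have g : Continuous (fun p : Fin 2 × Fin 4 => p.1 + hb p.2 + lb p.2) :=
        continuous_of_discreteTopology
      have h2 : Continuous (fun y : ℕ → Fin 4 => (secA h y i, y i)) :=
        ih.prodMk (continuous_apply i)
      exact g.comp h2

lemma sec_continuous (h : Fin 2) : Continuous (sec h) := by
  refine continuous_pi fun i => ?_
  have g : Continuous (fun p : Fin 2 × Fin 4 => mk2 p.1 (p.1 + hb p.2)) :=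
    continuous_of_discreteTopology
  have h2 : Continuous (fun y : ℕ → Fin 4 => (secA h y i, y i)) :=
    (secA_continuous h i).prodMk (continuous_apply i)
  exact g.comp h2

lemma tauD_continuous : Continuous tauD := by
  refine continuous_pi fun i => ?_
  have g : Continuous (fun p : Fin 4 × Fin 4 => dTable p.1 p.2) :=
    continuous_of_discreteTopology
  have h2 : Continuous (fun x : ℕ → Fin 4 => (x i, x (i+1))) :=
    (continuous_apply i).prodMk (continuous_apply (i+1))
  exact g.comp h2

/-- A partial homeomorphism witnessing local invertibility of `tauD`. -/
def tauDHomeo (h : Fin 2) : OpenPartialHomeomorph (ℕ → Fin 4) (ℕ → Fin 4) where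
  toFun := tauD
  invFun := sec h
  source := {x | hb (x 0) = h}
  target := Set.univ
  map_source' := fun _ _ => trivial
  map_target' := fun y _ => hb_mk2 _ _
  left_inv' := fun x hx => sec_tauD h x hx
  right_inv' := fun y _ => tauD_sec h y
  open_source := by
    have : Continuous (fun x : ℕ → Fin 4 => hb (x 0)) :=
      (continuous_of_discreteTopology (f := hb)).comp (continuous_apply 0)
    exact (isOpen_discrete {h}).preimage this
  open_target := isOpen_univ
  continuousOn_toFun := tauD_continuous.continuousOn
  continuousOn_invFun := (sec_continuous h).continuousOn

lemma isLocalHomeomorph_tauD : IsLocalHomeomorph tauD := by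
  intro x
  exact ⟨tauDHomeo (hb (x 0)), rfl, rfl⟩

/-! Extension for progressive block maps. -/

section ext
variable {A : Type*} {k : ℕ} (d' : (Fin (k+1) → A) → A) (hp : Progressive d')
  (p : Fin k → A) (y : ℕ → A)

noncomputable def extW : ℕ → Fin k → A
  | 0 => p
  | (i+1) => fun j => if h : (j : ℕ) + 1 < k then extW i ⟨j+1, h⟩
      else (Equiv.ofBijective _ (hp (extW i))).symm (y i)

lemma extW_shift (hk : 0 < k) :
    ∀ (m : ℕ) (i : ℕ) (j : Fin k), (j : ℕ) = m →
      extW d' hp p y i j = extW d' hp p y (i + m) ⟨0, hk⟩ := by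
  intro m
  induction m with
  | zero =>
      intro i j hj
      congr 1
      exact Fin.ext hj
  | succ m ih =>
      intro i j hj
      have hm : m + 1 < k := hj ▸ j.isLt
      have h1 : extW d' hp p y (i+1) ⟨m, by omega⟩ = extW d' hp p y i j := by
        show (if h : m + 1 < k then extW d' hp p y i ⟨m+1, h⟩ else _) = _
        rw [dif_pos hm]
        congr 1
        exact Fin.ext hj.symm
      rw [← h1, ih (i+1) ⟨m, by omega⟩ rfl]
      congr 1
      omega

end ext

lemma tau_ext {A : Type*} {k : ℕ} (d' : (Fin (k+1+1) → A) → A) (hp : Progressive d')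
    (p : Fin (k+1) → A) (y : ℕ → A) :
    tau d' (fun n => extW d' hp p y n ⟨0, Nat.succ_pos k⟩) = y := by
  funext i
  have hwin : (fun j : Fin (k+1) => extW d' hp p y (i + (j:ℕ)) ⟨0, Nat.succ_pos k⟩)
      = extW d' hp p y i := by
    funext j
    exact (extW_shift d' hp p y (Nat.succ_pos k) j i j rfl).symm
  have h1 : extW d' hp p y (i+1) ⟨k, by omega⟩
      = (Equiv.ofBijective _ (hp (extW d' hp p y i))).symm (y i) := by
    show (if h : k + 1 < k + 1 then extW d' hp p y i ⟨k+1, h⟩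
      else (Equiv.ofBijective _ (hp (extW d' hp p y i))).symm (y i)) = _
    rw [dif_neg (by omega)]
  have h2 : extW d' hp p y (i+1) ⟨k, by omega⟩
      = extW d' hp p y (i + (k+1)) ⟨0, Nat.succ_pos k⟩ := by
    rw [extW_shift d' hp p y (Nat.succ_pos k) k (i+1) ⟨k, by omega⟩ rfl]
    congr 1
    omega
  show d' (fun j : Fin (k+1+1) => extW d' hp p y (i + (j:ℕ)) ⟨0, Nat.succ_pos k⟩) = y i
  have hsnoc : (fun j : Fin (k+1+1) => extW d' hp p y (i + (j:ℕ)) ⟨0, Nat.succ_pos k⟩)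
      = Fin.snoc (fun j : Fin (k+1) => extW d' hp p y (i + (j:ℕ)) ⟨0, Nat.succ_pos k⟩)
        (extW d' hp p y (i + (k+1)) ⟨0, Nat.succ_pos k⟩) := by
    funext j
    refine Fin.lastCases ?_ ?_ j
    · simp [Fin.snoc_last]
    · intro jj
      simp [Fin.snoc_castSucc]
  rw [hsnoc, hwin, ← h2, h1]
  exact (Equiv.ofBijective _ (hp (extW d' hp p y i))).apply_symm_apply (y i)

theorem counterexample_local_homeo_not_progressive
    (d : (Fin 2 → Fin 4) → Fin 4)
    (hd : ∀ v : Fin 2 → Fin 4, d v = dTable (v 0) (v 1)) :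
    IsLocalHomeomorph (tau d) ∧ ¬ Progressive d ∧
    ¬ ∃ (k : ℕ) (d' : (Fin (k + 1) → Fin 4) → Fin 4),
        Progressive d' ∧ tau d' = tau d := by
  have htau : tau d = tauD := by
    funext x i
    show d (fun j : Fin 2 => x (i + j)) = dTable (x i) (x (i+1))
    rw [hd]
    norm_num
  refine ⟨?_, ?_, ?_⟩
  · rw [htau]; exact isLocalHomeomorph_tauD
  · intro hp
    have := (hp (fun _ => 0)).injective
    have h01 : d (Fin.snoc (fun _ => (0:Fin 4)) 0) = d (Fin.snoc (fun _ => (0:Fin 4)) 1) := by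
      rw [hd, hd]
      have e0 : ∀ a : Fin 4, (Fin.snoc (fun _ => (0:Fin 4)) a : Fin 2 → Fin 4) 0 = 0 := by
        intro a; rfl
      have e1 : ∀ a : Fin 4, (Fin.snoc (fun _ => (0:Fin 4)) a : Fin 2 → Fin 4) 1 = a := by
        intro a; rfl
      rw [e0, e0, e1, e1]
      decide
    have : (0 : Fin 4) = 1 := this h01
    exact absurd this (by decide)
  · rintro ⟨k, d', hp, he⟩
    rw [htau] at he
    match k, d', hp, he with
    | 0, d', hp, he =>
      -- tau d' is injective, but tauD identifies the constant sequences 0 and 3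
      have hinj : Function.Injective (tau d') := by
        intro x x' hxx'
        funext i
        have hw : ∀ z : ℕ → Fin 4, (fun j : Fin 1 => z (i + j)) = Fin.snoc Fin.elim0 (z i) := by
          intro z
          funext j
          have : j = Fin.last 0 := Subsingleton.elim _ _
          subst this
          simp [Fin.snoc]
        have := congrFun hxx' i
        simp only [tau] at this
        rw [hw x, hw x'] at this
        exact (hp Fin.elim0).injective this
      have hc : tau d' (fun _ => (0:Fin 4)) = tau d' (fun _ => (3:Fin 4)) := by
        rw [he]
        funext i
        show dTable 0 0 = dTable 3 3
        decide
      have := congrFun (hinj hc) 0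
      exact absurd this (by decide)
    | (k+1), d', hp, he =>
      set p0 : Fin (k+1) → Fin 4 := fun _ => 0 with hp0
      set p1 : Fin (k+1) → Fin 4 := fun j => if (j : ℕ) = 0 then 1 else 0 with hp1
      set y : ℕ → Fin 4 := fun _ => 0 with hy
      set x0 : ℕ → Fin 4 := fun n => extW d' hp p0 y n ⟨0, Nat.succ_pos k⟩ with hx0
      set x1 : ℕ → Fin 4 := fun n => extW d' hp p1 y n ⟨0, Nat.succ_pos k⟩ with hx1
      have t0 : tauD x0 = y := by rw [← he]; exact tau_ext d' hp p0 y
      have t1 : tauD x1 = y := by rw [← he]; exact tau_ext d' hp p1 y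
      have e0 : x0 0 = 0 := rfl
      have e1 : x1 0 = 1 := rfl
      have heq : x0 = x1 := by
        apply tauD_inj (t0.trans t1.symm)
        rw [e0, e1]
        decide
      have := congrFun heq 0
      rw [e0, e1] at this
      exact absurd this (by decide)
end

section
/- A block map d : A^n → A is regressive (for each fixed x_1⋯x_{n-1} ∈ A^{n-1}, the map a ↦ d(a x_1 ⋯ x_{n-1}) is a bijection of A) if and only if the induced sliding block code τ_d *-commutes with the shift map σ. -/
/-- A block map `d : A^(n+1) → A` is regressive if for each word `w ∈ A^n` the map
`a ↦ d(a w)` is a bijection of `A`. -/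
def Regressive {A : Type*} {n : ℕ} (d : (Fin (n + 1) → A) → A) : Prop :=
  ∀ w : Fin n → A, Function.Bijective fun a : A => d (Fin.cons a w)

private lemma ext_key {A : Type*} {n : ℕ} (x : ℕ → A) (a : A) (hx : x 0 = a) (w : Fin n → A)
    (hw : ∀ j : Fin n, x ((j : ℕ) + 1) = w j) :
    (fun j : Fin (n + 1) => x (0 + (j : ℕ))) = Fin.cons a w := by
  funext j
  induction j using Fin.cases with
  | zero => simpa using hx
  | succ k => simpa using hw k

theorem regressive_iff_star_commutes {A : Type*} [Fintype A] [Nonempty A] {n : ℕ}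
    (d : (Fin (n + 1) → A) → A) :
    Regressive d ↔
      ((tau d ∘ shift = shift ∘ tau d) ∧
        ∀ y z : ℕ → A, shift y = tau d z →
          ∃! x : ℕ → A, tau d x = y ∧ shift x = z) := by
  constructor
  · intro hreg
    refine ⟨?_, ?_⟩
    · funext x i
      simp only [Function.comp_apply, tau, shift]
      congr 1
      funext j
      congr 1
      omega
    · intro y z h
      obtain ⟨a, ha, hu⟩ := (hreg fun j : Fin n => z j).existsUnique (y 0)
      set x : ℕ → A := fun i => match i with | 0 => a | k + 1 => z k with hxdef
      have hshift : shift x = z := funext fun i => rfl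
      have htau : tau d x = y := by
        funext i
        cases i with
        | zero =>
          show d (fun j : Fin (n + 1) => x (0 + (j : ℕ))) = y 0
          rw [ext_key x a rfl (fun j : Fin n => z j) (fun j => rfl)]
          exact ha
        | succ k =>
          show d (fun j : Fin (n + 1) => x (k + 1 + (j : ℕ))) = y (k + 1)
          have heq : (fun j : Fin (n + 1) => x (k + 1 + (j : ℕ)))
              = fun j : Fin (n + 1) => z (k + (j : ℕ)) := by
            funext j
            have h3 : k + 1 + (j : ℕ) = (k + (j : ℕ)) + 1 := by omega
            rw [h3]
          rw [heq]
          exact (congrFun h k).symm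
      refine ⟨x, ⟨htau, hshift⟩, ?_⟩
      rintro x' ⟨h1, h2⟩
      funext i
      cases i with
      | zero =>
        show x' 0 = a
        apply hu
        have h1' := congrFun h1 0
        show d (Fin.cons (x' 0) fun j : Fin n => z j) = y 0
        rw [← ext_key x' (x' 0) rfl (fun j : Fin n => z j) (fun j => congrFun h2 j)]
        exact h1'
      | succ k => exact congrFun h2 k
  · rintro ⟨_, hstar⟩ w
    rw [Function.bijective_iff_existsUnique]
    intro b
    classical
    set z : ℕ → A := fun i => if h : i < n then w ⟨i, h⟩ else Classical.arbitrary A with hz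
    set y : ℕ → A := fun i => match i with | 0 => b | k + 1 => tau d z k with hy
    have hyz : shift y = tau d z := funext fun i => rfl
    obtain ⟨x, ⟨hx1, hx2⟩, hxu⟩ := hstar y z hyz
    have hw : (fun j : Fin n => z (j : ℕ)) = w := by
      funext j
      simp [hz, j.isLt]
    refine ⟨x 0, ?_, ?_⟩
    · show d (Fin.cons (x 0) w) = b
      have h1' := congrFun hx1 0
      rw [show y 0 = b from rfl] at h1'
      rw [← hw, ← ext_key x (x 0) rfl (fun j : Fin n => z j) (fun j => congrFun hx2 j)]
      exact h1'
    · intro a' ha'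
      set x' : ℕ → A := fun i => match i with | 0 => a' | k + 1 => z k with hx'
      have h2' : shift x' = z := funext fun i => rfl
      have h1' : tau d x' = y := by
        funext i
        cases i with
        | zero =>
          show d (fun j : Fin (n + 1) => x' (0 + (j : ℕ))) = y 0
          rw [ext_key x' a' rfl (fun j : Fin n => z j) (fun j => rfl), hw]
          exact ha'
        | succ k =>
          show d (fun j : Fin (n + 1) => x' (k + 1 + (j : ℕ))) = y (k + 1)
          have heq : (fun j : Fin (n + 1) => x' (k + 1 + (j : ℕ)))
              = fun j : Fin (n + 1) => z (k + (j : ℕ)) := by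
            funext j
            have h3 : k + 1 + (j : ℕ) = (k + (j : ℕ)) + 1 := by omega
            rw [h3]
          rw [heq]
          rfl
      exact congrFun (hxu x' ⟨h1', h2'⟩) 0
end

section
/- If φ : A^ℕ → A^ℕ *-commutes with the shift σ, then for every k ∈ ℕ the set Z_k^φ = {y ∈ A^ℕ : |φ^{-1}(y)| = k} is shift invariant, i.e., σ(Z_k^φ) = Z_k^φ. -/
theorem star_commute_fiber_card_shift_invariant {A : Type*} [Fintype A] [Nonempty A]
    (φ : (ℕ → A) → (ℕ → A))
    (hcomm : φ ∘ shift = shift ∘ φ)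
    (hstar : ∀ y z : ℕ → A, shift y = φ z →
      ∃! x : ℕ → A, φ x = y ∧ shift x = z) :
    ∀ k : ℕ,
      shift '' {y : ℕ → A | (φ ⁻¹' {y}).Finite ∧ (φ ⁻¹' {y}).ncard = k} =
        {y : ℕ → A | (φ ⁻¹' {y}).Finite ∧ (φ ⁻¹' {y}).ncard = k} := by
  intro k
  have hc : ∀ x : ℕ → A, φ (shift x) = shift (φ x) := fun x => congrFun hcomm x
  have key : ∀ y : ℕ → A, Set.BijOn shift (φ ⁻¹' {y}) (φ ⁻¹' {shift y}) := by
    intro y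
    refine ⟨?_, ?_, ?_⟩
    · intro x hx
      simp only [Set.mem_preimage, Set.mem_singleton_iff] at *
      rw [hc, hx]
    · intro x hx x' hx' hxx
      simp only [Set.mem_preimage, Set.mem_singleton_iff] at hx hx'
      have h1 : shift y = φ (shift x) := by rw [hc, hx]
      obtain ⟨w, hw, hu⟩ := hstar y (shift x) h1
      have e1 := hu x ⟨hx, rfl⟩
      have e2 := hu x' ⟨hx', hxx.symm⟩
      rw [e1, e2]
    · intro z hz
      simp only [Set.mem_preimage, Set.mem_singleton_iff] at hz ⊢
      obtain ⟨w, ⟨hw1, hw2⟩, _⟩ := hstar y z hz.symm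
      exact ⟨w, by simp [hw1], hw2⟩
  have hiff : ∀ y, ((φ ⁻¹' {y}).Finite ∧ (φ ⁻¹' {y}).ncard = k) ↔
      ((φ ⁻¹' {shift y}).Finite ∧ (φ ⁻¹' {shift y}).ncard = k) := by
    intro y
    have hb := key y
    have himg : shift '' (φ ⁻¹' {y}) = φ ⁻¹' {shift y} := hb.image_eq
    have hcard : (φ ⁻¹' {shift y}).ncard = (φ ⁻¹' {y}).ncard := by
      rw [← himg, Set.ncard_image_of_injOn hb.injOn]
    constructor
    · rintro ⟨hf, hcd⟩
      exact ⟨himg ▸ hf.image shift, by rw [hcard, hcd]⟩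
    · rintro ⟨hf, hcd⟩
      exact ⟨Set.Finite.of_finite_image (himg ▸ hf) hb.injOn, by rw [← hcard, hcd]⟩
  ext y
  simp only [Set.mem_image, Set.mem_setOf_eq]
  constructor
  · rintro ⟨w, hw, rfl⟩
    exact (hiff w).mp hw
  · intro hy
    obtain ⟨a⟩ := ‹Nonempty A›
    have hs : shift (fun i => Nat.rec a (fun n _ => y n) i) = y := rfl
    exact ⟨_, (hiff _).mpr (hs ▸ hy), hs⟩
end

section
/- A sliding block code φ : A^ℕ → A^ℕ is a local homeomorphism and *-commutes with the shift map σ if and only if φ is a k-fold covering map for some k and is defined by a regressive block map. -/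
open Set Topology Filter

/-- Prepend a letter to a one-sided sequence. -/
def ncons {A : Type*} (a : A) (z : ℕ → A) : ℕ → A
  | 0 => a
  | i + 1 => z i

@[simp] lemma ncons_zero {A : Type*} (a : A) (z : ℕ → A) : ncons a z 0 = a := rfl
@[simp] lemma ncons_succ {A : Type*} (a : A) (z : ℕ → A) (i : ℕ) : ncons a z (i + 1) = z i := rfl

@[simp] lemma shift_ncons {A : Type*} (a : A) (z : ℕ → A) : shift (ncons a z) = z := rfl

lemma ncons_shift {A : Type*} (x : ℕ → A) : ncons (x 0) (shift x) = x := by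
  funext i; cases i <;> rfl

lemma tau_shift_comm {A : Type*} {n : ℕ} (d : (Fin n → A) → A) :
    tau d ∘ shift = shift ∘ tau d := by
  funext x i
  show d _ = d _
  congr 1
  funext j
  show x (i + ↑j + 1) = x (i + 1 + ↑j)
  congr 1
  omega

lemma tau_ncons {A : Type*} {m : ℕ} (d : (Fin (m + 1) → A) → A) (a : A) (z : ℕ → A) :
    tau d (ncons a z) = ncons (d (Fin.cons a fun j => z ↑j)) (tau d z) := by
  funext i
  cases i with
  | zero =>
    show d _ = d _
    congr 1
    funext j
    refine Fin.cases ?_ (fun k => ?_) j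
    · rfl
    · show ncons a z (0 + ↑(k.succ)) = _
      rw [Fin.cons_succ, Fin.val_succ, Nat.zero_add]
      rfl
  | succ i =>
    show d _ = d _
    congr 1
    funext j
    show ncons a z (i + 1 + ↑j) = z (i + ↑j)
    have h : i + 1 + ↑j = (i + ↑j) + 1 := by omega
    rw [h, ncons_succ]

lemma shift_iterate {A : Type*} (M : ℕ) (x : ℕ → A) (i : ℕ) :
    shift^[M] x i = x (i + M) := by
  induction M generalizing x with
  | zero => rfl
  | succ M ih =>
    rw [Function.iterate_succ_apply, ih (shift x)]
    rfl

lemma star_of_regressive {A : Type*} {m : ℕ} {d : (Fin (m + 1) → A) → A}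
    (hreg : Regressive d) :
    ∀ y z : ℕ → A, shift y = tau d z →
      ∃! x : ℕ → A, tau d x = y ∧ shift x = z := by
  intro y z hyz
  set w : Fin m → A := fun j => z ↑j with hw
  obtain ⟨a, ha⟩ := (hreg w).2 (y 0)
  have hy : ncons (y 0) (tau d z) = y := by rw [← hyz]; exact ncons_shift y
  refine ⟨ncons a z, ⟨?_, shift_ncons a z⟩, ?_⟩
  · rw [tau_ncons, show d (Fin.cons a fun j => z ↑j) = y 0 from ha, hy]
  · rintro x ⟨hx1, hx2⟩
    have hx : x = ncons (x 0) z := by rw [← hx2]; exact (ncons_shift x).symm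
    rw [hx] at hx1 ⊢
    rw [tau_ncons] at hx1
    have h0 : d (Fin.cons (x 0) w) = y 0 := by
      have := congrFun hx1 0
      simpa using this
    have : x 0 = a := (hreg w).1 (h0.trans ha.symm)
    rw [this]

lemma regressive_of_star {A : Type*} [Nonempty A] {m : ℕ} {d : (Fin (m + 1) → A) → A}
    (hstar : ∀ y z : ℕ → A, shift y = tau d z →
      ∃! x : ℕ → A, tau d x = y ∧ shift x = z) :
    Regressive d := by
  classical
  intro w
  set z : ℕ → A := fun i => if h : i < m then w ⟨i, h⟩ else Classical.arbitrary A with hz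
  have hwz : (fun j : Fin m => z ↑j) = w := by
    funext j
    simp [hz, j.isLt]
  constructor
  · intro a b hab
    simp only at hab
    set y : ℕ → A := ncons (d (Fin.cons a w)) (tau d z) with hy
    obtain ⟨x, hx, huniq⟩ := hstar y z (shift_ncons _ _)
    have h1 : tau d (ncons a z) = y ∧ shift (ncons a z) = z :=
      ⟨by rw [tau_ncons, hwz], shift_ncons a z⟩
    have h2 : tau d (ncons b z) = y ∧ shift (ncons b z) = z :=
      ⟨by rw [tau_ncons, hwz, ← hab], shift_ncons b z⟩
    have := (huniq _ h1).trans (huniq _ h2).symm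
    exact congrFun this 0
  · intro b
    obtain ⟨x, ⟨hx1, hx2⟩, -⟩ := hstar (ncons b (tau d z)) z (shift_ncons _ _)
    refine ⟨x 0, ?_⟩
    have hx : x = ncons (x 0) z := by rw [← hx2]; exact (ncons_shift x).symm
    rw [hx, tau_ncons, hwz] at hx1
    exact congrFun hx1 0

lemma tau_continuous {A : Type*} [TopologicalSpace A] [DiscreteTopology A] {n : ℕ}
    (d : (Fin n → A) → A) : Continuous (tau d) := by
  refine continuous_pi fun i => ?_
  have h : (fun x : ℕ → A => tau d x i) = d ∘ fun x (j : Fin n) => x (i + j) := rfl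
  rw [h]
  exact continuous_of_discreteTopology.comp (continuous_pi fun j => continuous_apply _)

lemma tau_surjective {A : Type*} [Nonempty A] [Finite A] [TopologicalSpace A]
    [DiscreteTopology A] {m : ℕ} (d : (Fin (m + 1) → A) → A) (hreg : Regressive d) :
    Function.Surjective (tau d) := by
  classical
  intro y
  have hstep : ∀ (M : ℕ) (y : ℕ → A), ∃ x, ∀ i < M, tau d x i = y i := by
    intro M
    induction M with
    | zero => exact fun y => ⟨fun _ => Classical.arbitrary A, fun i h => absurd h (Nat.not_lt_zero i)⟩
    | succ M ih =>
      intro y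
      obtain ⟨x, hx⟩ := ih (shift y)
      obtain ⟨a, ha⟩ := (hreg fun j => x ↑j).2 (y 0)
      refine ⟨ncons a x, fun i hi => ?_⟩
      rw [tau_ncons]
      cases i with
      | zero => exact ha
      | succ i => exact hx i (Nat.lt_of_succ_lt_succ hi)
  set C : ℕ → Set (ℕ → A) := fun M => {x | ∀ i < M, tau d x i = y i} with hC
  have hCcl : ∀ M, IsClosed (C M) := by
    intro M
    have h : C M = ⋂ i ∈ Finset.range M, (fun x => tau d x i) ⁻¹' {y i} := by
      ext x; simp [hC]
    rw [h]
    exact isClosed_biInter fun i _ =>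
      isClosed_singleton.preimage ((continuous_apply i).comp (tau_continuous d))
  have hconc :=
    IsCompact.nonempty_iInter_of_sequence_nonempty_isCompact_isClosed C
      (fun M x hx i hi => hx i (Nat.lt_succ_of_lt hi))
      (fun M => hstep M y) ((hCcl 0).isCompact) hCcl
  obtain ⟨x, hx⟩ := hconc
  exact ⟨x, funext fun i => mem_iInter.1 hx (i + 1) i (Nat.lt_succ_self i)⟩

lemma fiber_finite {E X : Type*} [TopologicalSpace E] [TopologicalSpace X]
    [CompactSpace E] [T1Space X] {f : E → X}
    (hf : IsLocalHomeomorph f) (y : X) : (f ⁻¹' {y}).Finite := by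
  classical
  have hfc := hf.continuous
  choose e he hfe using hf
  have hcomp : IsCompact (f ⁻¹' {y}) := (isClosed_singleton.preimage hfc).isCompact
  obtain ⟨t, ht⟩ := hcomp.elim_finite_subcover (fun i : ↥(f ⁻¹' {y}) => (e ↑i).source)
    (fun i => (e ↑i).open_source) (fun x hx => mem_iUnion.2 ⟨⟨x, hx⟩, he x⟩)
  refine Set.Finite.subset (t.finite_toSet.image Subtype.val) ?_
  intro x hx
  obtain ⟨i, hit, hx'⟩ := mem_iUnion₂.1 (ht hx)
  have hxy : f x = y := hx
  have hiy : f ↑i = y := i.2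
  have hxi : x = ↑i := by
    apply (e ↑i).injOn hx' (he ↑i)
    show (e ↑i) x = (e ↑i) ↑i
    rw [← congrFun (hfe ↑i) x, ← congrFun (hfe ↑i) ↑i, hxy, hiy]
  exact ⟨i, hit, hxi.symm⟩

lemma exists_cylinder {A : Type*} [TopologicalSpace A] {W : Set (ℕ → A)} (hW : IsOpen W)
    {y : ℕ → A} (hy : y ∈ W) :
    ∃ M : ℕ, ∀ z : ℕ → A, (∀ i < M, z i = y i) → z ∈ W := by
  obtain ⟨I, u, hu, hsub⟩ := isOpen_pi_iff.1 hW y hy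
  refine ⟨I.sup id + 1, fun z hz => hsub (mem_pi.2 fun i hi => ?_)⟩
  rw [hz i (Nat.lt_succ_of_le (Finset.le_sup (f := id) hi))]
  exact (hu i hi).2
open Set Topology Filter

section Key

variable {E X : Type*} [TopologicalSpace E] [TopologicalSpace X]

theorem key_even_covered [CompactSpace E] [T2Space E] [T2Space X]
    {f : E → X} (hf : IsLocalHomeomorph f) (y : X)
    (hfin : (f ⁻¹' {y}).Finite) (hne : (f ⁻¹' {y}).Nonempty) :
    ∃ W : Set X, IsOpen W ∧ y ∈ W ∧ IsEvenlyCovered f y (f ⁻¹' {y}) ∧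
      ∀ y' ∈ W, (f ⁻¹' {y'}).ncard = (f ⁻¹' {y}).ncard := by
  classical
  have hfc := hf.continuous
  haveI : Finite ↥(f ⁻¹' {y}) := hfin.to_subtype
  haveI : Nonempty ↥(f ⁻¹' {y}) := hne.to_subtype
  obtain ⟨V, hV, hVd⟩ := hfin.t2_separation
  choose e he hfe using hf
  set R : ↥(f ⁻¹' {y}) → OpenPartialHomeomorph E X :=
    fun i => (e ↑i).restrOpen (V ↑i) (hV ↑i).2 with hR
  have hRs : ∀ i, (R i).source = (e (↑i : E)).source ∩ V ↑i := fun i =>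
    OpenPartialHomeomorph.restrOpen_source _ _ _
  have hRcoe : ∀ i, ⇑(R i) = f := fun i => (hfe ↑i).symm
  have hself : ∀ i, (↑i : E) ∈ (R i).source := fun i => (hRs i) ▸ ⟨he ↑i, (hV ↑i).1⟩
  have hdisj : ∀ (i j) (x : E), x ∈ (R i).source → x ∈ (R j).source → i = j := by
    intro i j x hxi hxj
    by_contra hij
    have hVij : Disjoint (V ↑i) (V ↑j) :=
      hVd i.2 j.2 (fun h => hij (Subtype.ext h))
    exact (Set.disjoint_left.1 hVij) ((hRs i ▸ hxi).2) ((hRs j ▸ hxj).2)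
  set K : Set X := f '' (⋃ i, (R i).source)ᶜ with hK
  have hKcl : IsClosed K :=
    (((isOpen_iUnion fun i => (R i).open_source).isClosed_compl.isCompact).image hfc).isClosed
  set W : Set X := (⋂ i, (R i).target) \ K with hW
  have hWo : IsOpen W := ((isOpen_iInter_of_finite fun i => (R i).open_target)).sdiff hKcl
  have hyW : y ∈ W := by
    constructor
    · refine mem_iInter.2 fun i => ?_
      have h := (R i).map_source (hself i)
      have hiy : f (↑i : E) = y := i.2
      rwa [show (R i) ↑i = f ↑i from congrFun (hRcoe i) ↑i, hiy] at h
    · rintro ⟨x, hx, hfx⟩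
      exact hx (mem_iUnion.2 ⟨⟨x, hfx⟩, hself ⟨x, hfx⟩⟩)
  have hmemT : ∀ (i) {y' : X}, y' ∈ W → y' ∈ (R i).target := by
    intro i y' hy'
    exact mem_iInter.1 hy'.1 i
  have hsymm_mem : ∀ (i) {y' : X} (_ : y' ∈ W),
      (R i).symm y' ∈ (R i).source ∧ f ((R i).symm y') = y' := by
    intro i y' hy'
    refine ⟨(R i).map_target (hmemT i hy'), ?_⟩
    rw [← congrFun (hRcoe i) ((R i).symm y')]
    exact (R i).right_inv (hmemT i hy')
  have hfiber : ∀ {y' : X}, y' ∈ W → ∀ x : E, f x = y' → ∃ i, x ∈ (R i).source := by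
    intro y' hy' x hx
    by_contra h
    push_neg at h
    refine hy'.2 ⟨x, fun hmem => ?_, hx⟩
    obtain ⟨i, hi⟩ := mem_iUnion.1 hmem
    exact h i hi
  have hrec : ∀ {y' : X} (i) (x : E), y' ∈ W → f x = y' → x ∈ (R i).source →
      x = (R i).symm y' := by
    intro y' i x _ hx hxi
    have h := (R i).left_inv hxi
    rw [show (R i) x = f x from congrFun (hRcoe i) x, hx] at h
    exact h.symm
  -- cardinality
  have hcard : ∀ y' ∈ W, (f ⁻¹' {y'}).ncard = (f ⁻¹' {y}).ncard := by
    intro y' hy'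
    have himg : f ⁻¹' {y'} = (fun i : ↥(f ⁻¹' {y}) => (R i).symm y') '' univ := by
      ext x
      simp only [mem_preimage, mem_singleton_iff, image_univ, mem_range]
      constructor
      · intro hx
        obtain ⟨i, hi⟩ := hfiber hy' x hx
        exact ⟨i, (hrec i x hy' hx hi).symm⟩
      · rintro ⟨i, rfl⟩
        exact (hsymm_mem i hy').2
    have hinj : Function.Injective fun i : ↥(f ⁻¹' {y}) => (R i).symm y' := by
      intro i j hij
      simp only at hij
      have hj := (hsymm_mem j hy').1
      rw [← hij] at hj
      exact hdisj i j _ ((hsymm_mem i hy').1) hj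
    rw [himg, Set.ncard_image_of_injective _ hinj, Set.ncard_univ, Nat.card_coe_set_eq]
  -- index map
  set idx : E → ↥(f ⁻¹' {y}) := fun x =>
    if h : ∃ i, x ∈ (R i).source then h.choose else Classical.arbitrary _ with hidxdef
  have hidx : ∀ {x : E} {i}, x ∈ (R i).source → idx x = i := by
    intro x i hx
    have h : ∃ i, x ∈ (R i).source := ⟨i, hx⟩
    rw [hidxdef]
    simp only [dif_pos h]
    exact hdisj _ i x h.choose_spec hx
  -- trivialization
  set t : Bundle.Trivialization ↥(f ⁻¹' {y}) f :=
    { toFun := fun x => (f x, idx x)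
      invFun := fun p => (R p.2).symm p.1
      source := f ⁻¹' W
      target := W ×ˢ univ
      map_source' := fun x hx => ⟨hx, mem_univ _⟩
      map_target' := fun p hp => by
        show f ((R p.2).symm p.1) ∈ W
        rw [(hsymm_mem p.2 hp.1).2]
        exact hp.1
      left_inv' := by
        intro x hx
        obtain ⟨i, hi⟩ := hfiber (show f x ∈ W from hx) x rfl
        show (R (idx x)).symm (f x) = x
        rw [hidx hi]
        exact (hrec i x hx rfl hi).symm
      right_inv' := by
        rintro ⟨b, i⟩ hp
        have h1 := hsymm_mem i hp.1
        show (f ((R i).symm b), idx ((R i).symm b)) = (b, i)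
        rw [h1.2, hidx h1.1]
      open_source := hWo.preimage hfc
      open_target := hWo.prod isOpen_univ
      continuousOn_toFun := by
        refine ContinuousOn.prodMk hfc.continuousOn ?_
        intro x hx
        obtain ⟨i, hi⟩ := hfiber (show f x ∈ W from hx) x rfl
        have hev : idx =ᶠ[nhds x] fun _ => i :=
          eventually_of_mem ((R i).open_source.mem_nhds hi) fun x' hx' => hidx hx'
        exact hev.continuousAt.continuousWithinAt
      continuousOn_invFun := by
        rintro ⟨b, i⟩ hp
        have hO : IsOpen ((R i).target ×ˢ ({i} : Set ↥(f ⁻¹' {y}))) :=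
          (R i).open_target.prod (isOpen_discrete _)
        have hcont : ContinuousOn (fun p : X × ↥(f ⁻¹' {y}) => (R p.2).symm p.1)
            ((R i).target ×ˢ ({i} : Set ↥(f ⁻¹' {y}))) := by
          refine ContinuousOn.congr
            ((R i).continuousOn_symm.comp continuousOn_fst fun p hp => hp.1) ?_
          rintro ⟨b', j⟩ hp
          have : j = i := hp.2
          rw [this]
          rfl
        exact (hcont.continuousAt (hO.mem_nhds ⟨hmemT i hp.1, rfl⟩)).continuousWithinAt
      baseSet := W
      open_baseSet := hWo
      source_eq := rfl
      target_eq := rfl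
      proj_toFun := fun x _ => rfl }
  exact ⟨W, hWo, hyW, IsEvenlyCovered.of_trivialization (t := t) hyW, hcard⟩

end Key
theorem local_homeo_star_commute_iff_covering {A : Type*} [Fintype A] [Nonempty A]
    [TopologicalSpace A] [DiscreteTopology A]
    (φ : (ℕ → A) → (ℕ → A))
    (hsbc : ∃ (n : ℕ) (d : (Fin n → A) → A), φ = tau d) :
    (IsLocalHomeomorph φ ∧ (φ ∘ shift = shift ∘ φ) ∧
        ∀ y z : ℕ → A, shift y = φ z →
          ∃! x : ℕ → A, φ x = y ∧ shift x = z) ↔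
      ((∃ k : ℕ, IsCoveringMap φ ∧ Function.Surjective φ ∧
            ∀ y : ℕ → A, (φ ⁻¹' {y}).Finite ∧ (φ ⁻¹' {y}).ncard = k) ∧
        ∃ (n : ℕ) (d : (Fin (n + 1) → A) → A), Regressive d ∧ φ = tau d) := by
  classical
  obtain ⟨n, d0, rfl⟩ := hsbc
  constructor
  · rintro ⟨hloc, hcomm, hstar⟩
    have hrep : ∃ (m : ℕ) (d : (Fin (m + 1) → A) → A), Regressive d ∧ tau d0 = tau d := by
      cases n with
      | zero =>
        have hsub : Subsingleton A := by
          by_contra h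
          rw [not_subsingleton_iff_nontrivial] at h
          set c : A := d0 fun j => j.elim0 with hc
          obtain ⟨b, hb⟩ := exists_ne c
          have htau : ∀ (x : ℕ → A) (i : ℕ), tau d0 x i = c := by
            intro x i
            show d0 _ = d0 _
            congr 1
            funext j
            exact j.elim0
          have h1 : shift (ncons b fun _ => c) = tau d0 (ncons b fun _ => c) := by
            funext i
            rw [htau]
            rfl
          obtain ⟨x, ⟨hx1, -⟩, -⟩ := hstar _ _ h1
          have h2 := congrFun hx1 0
          rw [htau] at h2
          exact hb h2.symm
        refine ⟨0, fun v => v 0, ?_, ?_⟩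
        · intro w
          exact ⟨fun a b h => by simpa using h, fun b => ⟨b, by simp⟩⟩
        · funext x i
          exact Subsingleton.elim _ _
      | succ m => exact ⟨m, d0, regressive_of_star hstar, rfl⟩
    obtain ⟨m, d, hreg, hphi⟩ := hrep
    have hsurj : Function.Surjective (tau d0) := by
      rw [hphi]
      exact tau_surjective d hreg
    have hfin : ∀ y : ℕ → A, ((tau d0) ⁻¹' {y}).Finite := fun y => fiber_finite hloc y
    have hne : ∀ y : ℕ → A, ((tau d0) ⁻¹' {y}).Nonempty := fun y => hsurj y
    have hkey := fun y : ℕ → A => key_even_covered hloc y (hfin y) (hne y)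
    have hcov : IsCoveringMap (tau d0) := fun y => (hkey y).choose_spec.2.2.1
    set c : (ℕ → A) → ℕ := fun y => ((tau d0) ⁻¹' {y}).ncard with hcdef
    have hshift : ∀ y : ℕ → A, c (shift y) = c y := by
      intro y
      have himg : (tau d0) ⁻¹' {shift y} = shift '' ((tau d0) ⁻¹' {y}) := by
        ext z
        simp only [Set.mem_preimage, Set.mem_singleton_iff, Set.mem_image]
        constructor
        · intro hz
          obtain ⟨x, ⟨hx1, hx2⟩, -⟩ := hstar y z hz.symm
          exact ⟨x, hx1, hx2⟩
        · rintro ⟨x, hx, rfl⟩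
          have h : tau d0 (shift x) = shift (tau d0 x) := congrFun hcomm x
          rw [h, hx]
      have hinj : Set.InjOn shift ((tau d0) ⁻¹' {y}) := by
        intro x1 h1 x2 h2 hx
        have h1' : tau d0 x1 = y := h1
        have h2' : tau d0 x2 = y := h2
        have hs : shift y = tau d0 (shift x1) := by
          have h : tau d0 (shift x1) = shift (tau d0 x1) := congrFun hcomm x1
          rw [h, h1']
        obtain ⟨x, -, huniq⟩ := hstar y (shift x1) hs
        exact (huniq x1 ⟨h1', rfl⟩).trans (huniq x2 ⟨h2', hx.symm⟩).symm
      rw [hcdef]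
      simp only
      rw [himg, Set.ncard_image_of_injOn hinj]
    have hshiftk : ∀ (k : ℕ) (w : ℕ → A), c (shift^[k] w) = c w := by
      intro k
      induction k with
      | zero => intro w; rfl
      | succ k ih =>
        intro w
        rw [Function.iterate_succ_apply, ih (shift w), hshift]
    have hconst : ∀ y y' : ℕ → A, c y = c y' := by
      intro y y'
      obtain ⟨W, hWo, hyW, -, hWc⟩ := hkey y
      obtain ⟨M, hM⟩ := exists_cylinder hWo hyW
      set y'' : ℕ → A := fun i => if h : i < M then y i else y' (i - M) with hy''
      have h1 : c y'' = c y := hWc y'' (hM y'' fun i hi => dif_pos hi)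
      have h2 : shift^[M] y'' = y' := by
        funext i
        rw [shift_iterate, hy'']
        simp only
        rw [dif_neg (by omega)]
        congr 1
        omega
      calc c y = c y'' := h1.symm
        _ = c (shift^[M] y'') := (hshiftk M y'').symm
        _ = c y' := by rw [h2]
    set y₀ : ℕ → A := fun _ => Classical.arbitrary A with hy₀
    exact ⟨⟨c y₀, hcov, hsurj, fun y => ⟨hfin y, hconst y y₀⟩⟩, m, d, hreg, hphi⟩
  · rintro ⟨⟨k, hcov, -, -⟩, ⟨m, d, hreg, hphi⟩⟩
    refine ⟨hcov.isLocalHomeomorph, tau_shift_comm d0, ?_⟩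
    rw [hphi]
    exact star_of_regressive hreg
end
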